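/- arXiv:2006.08408 — 2 statements merged into one kernel-verified Lean document; each statement's English description precedes it below -/
import Mathlib

section
/- In the graph $\Gamma^{a,b}_{k,\ell,W}$ with $W > \ell \geq 1$: if for every index $i \in [k^2]$ at least one of the edges $p_i$ or $q_i$ is present (i.e., $a_i = 0$ or $b_i = 0$ for all $i$), then every pair of vertices is at distance at most $W + 2\ell$; and if there exists $i$ with both edges absent (i.e., $a_i = b_i = 1$), then some pair of vertices has distance at least $2W + \ell$. -/
open scoped ENNReal

/-- Total weight of a walk with edge weights `w`. -/
noncomputable def walkWeight {V : Type*} (G : SimpleGraph V) (w : V → V → ℝ≥0∞)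
    {u v : V} (p : G.Walk u v) : ℝ≥0∞ :=
  (p.darts.map fun d => w d.toProd.1 d.toProd.2).sum

/-- Weighted shortest-path distance (∞ if not connected). -/
noncomputable def wdist {V : Type*} (G : SimpleGraph V) (w : V → V → ℝ≥0∞)
    (u v : V) : ℝ≥0∞ :=
  ⨅ p : G.Walk u v, walkWeight G w p

/-- Vertices of the lower-bound graph Γ^{a,b}_{k,ℓ,W}: the four cliques
`V1, V2, U1, U2` (each of size `k`), the internal vertices `P1 i t`, `P2 i t`
of the matching paths of `ℓ` edges (so `ℓ - 1` internal vertices each), the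
internal vertices `M t` of the hub path, and the two hubs `vhat`, `uhat`. -/
inductive GV (k ℓ : ℕ) : Type
  | V1 (i : Fin k) : GV k ℓ
  | V2 (i : Fin k) : GV k ℓ
  | U1 (i : Fin k) : GV k ℓ
  | U2 (i : Fin k) : GV k ℓ
  | P1 (i : Fin k) (t : Fin (ℓ - 1)) : GV k ℓ
  | P2 (i : Fin k) (t : Fin (ℓ - 1)) : GV k ℓ
  | M (t : Fin (ℓ - 1)) : GV k ℓ
  | vhat : GV k ℓ
  | uhat : GV k ℓ

/-- Base edge relation of Γ^{a,b}_{k,ℓ,W}: cliques on `V1`,`V2`,`U1`,`U2`;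
hub edges from `vhat` to `V1 ∪ V2` and from `uhat` to `U1 ∪ U2`; the matching
paths of `ℓ` unit edges between `V1 i` and `U1 i`, between `V2 i` and `U2 i`,
and between the hubs; and the bit edges: `{V1 i, V2 j}` present iff `a i j = false`
and `{U1 i, U2 j}` present iff `b i j = false`. -/
def gammaRel (k ℓ : ℕ) (a b : Fin k → Fin k → Bool) : GV k ℓ → GV k ℓ → Prop :=
  fun x y => match x, y with
  | .V1 _, .V1 _ => True
  | .V2 _, .V2 _ => True
  | .U1 _, .U1 _ => True
  | .U2 _, .U2 _ => True
  | .V1 i, .V2 j => a i j = false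
  | .U1 i, .U2 j => b i j = false
  | .vhat, .V1 _ => True
  | .vhat, .V2 _ => True
  | .uhat, .U1 _ => True
  | .uhat, .U2 _ => True
  | .V1 i, .U1 j => i = j ∧ ℓ ≤ 1
  | .V1 i, .P1 j t => i = j ∧ t.val = 0
  | .P1 i t, .U1 j => i = j ∧ t.val = ℓ - 2
  | .P1 i t, .P1 j s => i = j ∧ t.val + 1 = s.val
  | .V2 i, .U2 j => i = j ∧ ℓ ≤ 1
  | .V2 i, .P2 j t => i = j ∧ t.val = 0
  | .P2 i t, .U2 j => i = j ∧ t.val = ℓ - 2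
  | .P2 i t, .P2 j s => i = j ∧ t.val + 1 = s.val
  | .vhat, .uhat => ℓ ≤ 1
  | .vhat, .M t => t.val = 0
  | .M t, .uhat => t.val = ℓ - 2
  | .M t, .M s => t.val + 1 = s.val
  | _, _ => False

/-- The graph Γ^{a,b}_{k,ℓ,W} (symmetrized, loopless). -/
def Gamma (k ℓ : ℕ) (a b : Fin k → Fin k → Bool) : SimpleGraph (GV k ℓ) :=
  SimpleGraph.fromRel (gammaRel k ℓ a b)

/-- Edge weights of Γ^{a,b}_{k,ℓ,W}: weight `Wt` on clique, hub and bit edges,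
weight 1 on all path edges. -/
noncomputable def gammaW (k ℓ : ℕ) (Wt : ℝ≥0∞) : GV k ℓ → GV k ℓ → ℝ≥0∞ :=
  fun x y => match x, y with
  | .V1 _, .V1 _ => Wt
  | .V2 _, .V2 _ => Wt
  | .U1 _, .U1 _ => Wt
  | .U2 _, .U2 _ => Wt
  | .V1 _, .V2 _ => Wt
  | .V2 _, .V1 _ => Wt
  | .U1 _, .U2 _ => Wt
  | .U2 _, .U1 _ => Wt
  | .vhat, .V1 _ => Wt
  | .V1 _, .vhat => Wt
  | .vhat, .V2 _ => Wt
  | .V2 _, .vhat => Wt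
  | .uhat, .U1 _ => Wt
  | .U1 _, .uhat => Wt
  | .uhat, .U2 _ => Wt
  | .U2 _, .uhat => Wt
  | _, _ => 1


/-!
Every vertex of `Γ` lies on one of the unit-weight paths `V1 i ⋯ U1 i`, `V2 i ⋯ U2 i`,
`vhat ⋯ uhat`, at distance at most `ℓ` from both of its ends. If `a` and `b` are disjoint, any
two such paths have their `V`-ends or their `U`-ends joined by a single heavy edge (a clique
edge, a hub edge, `p_{ij}` or `q_{ij}`), which gives `W + 2ℓ`.

If `a_{ij} = b_{ij} = 1`, give every vertex the potential `level · W + position`, where the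
level of a path is `0` for `V1 i ⋯ U1 i`, `2` for `V2 j ⋯ U2 j` and `1` otherwise. Heavy edges
change the level by at most one and keep the position (only `p_{ij}` and `q_{ij}` would join
levels `0` and `2`), unit edges keep the level and move the position by one, so the distance from
`V1 i` to `U2 j` is at least their potential difference `2W + ℓ`.
-/

namespace SimpleGraph
variable {V : Type*} (G : SimpleGraph V) (w : V → V → ℝ≥0∞)

lemma walkWeight_cons {u v x : V} (h : G.Adj u v) (p : G.Walk v x) :
    walkWeight G w (.cons h p) = w u v + walkWeight G w p := by
  simp [walkWeight]

lemma walkWeight_append {u v x : V} (p : G.Walk u v) (q : G.Walk v x) :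
    walkWeight G w (p.append q) = walkWeight G w p + walkWeight G w q := by
  simp [walkWeight, Walk.darts_append]

lemma walkWeight_reverse (hw : ∀ x y, w x y = w y x) {u v : V} (p : G.Walk u v) :
    walkWeight G w p.reverse = walkWeight G w p := by
  simp only [walkWeight, Walk.darts_reverse, List.map_reverse, List.sum_reverse, List.map_map]
  exact congrArg List.sum (List.map_congr_left fun d _ => hw _ _)

lemma wdist_le_walkWeight {u v : V} (p : G.Walk u v) : wdist G w u v ≤ walkWeight G w p :=
  iInf_le _ p

lemma wdist_self (u : V) : wdist G w u u = 0 :=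
  nonpos_iff_eq_zero.mp (wdist_le_walkWeight G w .nil)

lemma wdist_triangle (u v x : V) : wdist G w u x ≤ wdist G w u v + wdist G w v x := by
  simp only [wdist, ENNReal.iInf_add, ENNReal.add_iInf]
  refine le_iInf₂ fun p q => ?_
  rw [← walkWeight_append]
  exact iInf_le _ _

lemma wdist_le_of_adj {u v : V} (h : G.Adj u v) : wdist G w u v ≤ w u v := by
  simpa [walkWeight_cons, walkWeight] using wdist_le_walkWeight G w (.cons h .nil)

lemma wdist_comm (hw : ∀ x y, w x y = w y x) (u v : V) : wdist G w u v = wdist G w v u := by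
  have key : ∀ u v : V, wdist G w u v ≤ wdist G w v u := fun u v =>
    le_iInf fun p => walkWeight_reverse G w hw p ▸ wdist_le_walkWeight G w p.reverse
  exact le_antisymm (key u v) (key v u)

lemma wdist_le_of_chain (f : ℕ → V) (n : ℕ)
    (hf : ∀ e < n, G.Adj (f e) (f (e + 1)) ∧ w (f e) (f (e + 1)) ≤ 1) {m : ℕ} :
    ∀ {d : ℕ}, m + d ≤ n → wdist G w (f m) (f (m + d)) ≤ d
  | 0, _ => by simp [wdist_self]
  | d + 1, h => by
    obtain ⟨hadj, hw⟩ := hf (m + d) (by omega)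
    calc wdist G w (f m) (f (m + (d + 1)))
        ≤ wdist G w (f m) (f (m + d)) + wdist G w (f (m + d)) (f (m + d + 1)) :=
          wdist_triangle G w _ _ _
      _ ≤ d + 1 := add_le_add (wdist_le_of_chain f n hf (by omega))
          ((wdist_le_of_adj G w hadj).trans hw)
      _ = (d + 1 : ℕ) := by push_cast; rfl

lemma le_add_wdist_of_potential (φ : V → ℝ≥0∞) (hφ : ∀ x y, G.Adj x y → φ y ≤ φ x + w x y)
    (u v : V) : φ v ≤ φ u + wdist G w u v := by
  rw [wdist, ENNReal.add_iInf]
  refine le_iInf fun p => ?_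
  induction p with
  | nil => simp [walkWeight]
  | @cons x y z hadj q ih =>
    calc φ z ≤ φ y + walkWeight G w q := ih
      _ ≤ φ x + w x y + walkWeight G w q := add_le_add_left (hφ x y hadj) _
      _ = φ x + walkWeight G w (.cons hadj q) := by rw [walkWeight_cons, add_assoc]

lemma wdist_fromRel_le {r : V → V → Prop} {u v : V} (h : r u v ∨ r v u) :
    wdist (fromRel r) w u v ≤ w u v := by
  obtain rfl | hne := eq_or_ne u v
  · simp [wdist_self]
  · exact wdist_le_of_adj _ w ⟨hne, h⟩

end SimpleGraph

/-- The unit-weight paths `V1 i ⋯ U1 i`, `V2 i ⋯ U2 i` and `vhat ⋯ uhat` of `Γ`. -/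
inductive GV.Track (k : ℕ) : Type
  | one (i : Fin k)
  | two (i : Fin k)
  | hub

namespace GV.Track
variable {k ℓ : ℕ}

def vEnd : Track k → GV k ℓ
  | one i => V1 i
  | two i => V2 i
  | hub => vhat

def uEnd : Track k → GV k ℓ
  | one i => U1 i
  | two i => U2 i
  | hub => uhat

def inner : Track k → Fin (ℓ - 1) → GV k ℓ
  | one i => P1 i
  | two i => P2 i
  | hub => M

def vertex (ℓ : ℕ) (c : Track k) : ℕ → GV k ℓ
  | 0 => c.vEnd
  | m + 1 => if h : m < ℓ - 1 then c.inner ⟨m, h⟩ else c.uEnd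

lemma vertex_zero (c : Track k) : c.vertex ℓ 0 = c.vEnd := rfl

lemma vertex_self (hℓ : 1 ≤ ℓ) (c : Track k) : c.vertex ℓ ℓ = c.uEnd := by
  obtain ⟨m, rfl⟩ : ∃ m, ℓ = m + 1 := ⟨ℓ - 1, by omega⟩
  simp [vertex]

lemma adj_vertex_succ (a b : Fin k → Fin k → Bool) (Wt : ℝ≥0∞) (c : Track k) {m : ℕ}
    (hm : m < ℓ) :
    (Gamma k ℓ a b).Adj (c.vertex ℓ m) (c.vertex ℓ (m + 1)) ∧
      gammaW k ℓ Wt (c.vertex ℓ m) (c.vertex ℓ (m + 1)) ≤ 1 := by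
  rcases m with _ | m <;> cases c <;>
    simp only [vertex, vEnd, uEnd, inner] <;> split_ifs <;>
    simp_all [Gamma, gammaRel, gammaW] <;> omega

end GV.Track

namespace GV
variable {k ℓ : ℕ}

def track : GV k ℓ → Track k
  | V1 i | U1 i | P1 i _ => .one i
  | V2 i | U2 i | P2 i _ => .two i
  | M _ | vhat | uhat => .hub

def pos : GV k ℓ → ℕ
  | V1 _ | V2 _ | vhat => 0
  | U1 _ | U2 _ | uhat => ℓ
  | P1 _ t | P2 _ t | M t => t + 1

lemma pos_le (x : GV k ℓ) : x.pos ≤ ℓ := by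
  cases x <;> simp only [pos] <;> omega

lemma track_vertex_pos (hℓ : 1 ≤ ℓ) (x : GV k ℓ) : x.track.vertex ℓ x.pos = x := by
  cases x <;> first
    | exact Track.vertex_self hℓ _
    | simp [track, pos, Track.vertex, Track.vEnd, Track.inner]

end GV

section Upper
variable {k ℓ : ℕ} (a b : Fin k → Fin k → Bool) (Wt : ℝ≥0∞)

lemma gammaW_comm (x y : GV k ℓ) : gammaW k ℓ Wt x y = gammaW k ℓ Wt y x := by
  cases x <;> cases y <;> rfl

lemma wdist_track_vertex_le (c : GV.Track k) {m d : ℕ} (h : m + d ≤ ℓ) :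
    wdist (Gamma k ℓ a b) (gammaW k ℓ Wt) (c.vertex ℓ m) (c.vertex ℓ (m + d)) ≤ d :=
  SimpleGraph.wdist_le_of_chain _ _ (c.vertex ℓ) ℓ (fun _ he => c.adj_vertex_succ a b Wt he) h

lemma wdist_track_vEnd_le (hℓ : 1 ≤ ℓ) (x : GV k ℓ) :
    wdist (Gamma k ℓ a b) (gammaW k ℓ Wt) x x.track.vEnd ≤ ℓ := by
  have h := wdist_track_vertex_le a b Wt x.track (ℓ := ℓ) (m := 0) (d := x.pos)
    (by simpa using x.pos_le)
  rw [zero_add, GV.track_vertex_pos hℓ, GV.Track.vertex_zero] at h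
  rw [SimpleGraph.wdist_comm _ _ (gammaW_comm Wt)]
  exact h.trans (by exact_mod_cast x.pos_le)

lemma wdist_track_uEnd_le (hℓ : 1 ≤ ℓ) (x : GV k ℓ) :
    wdist (Gamma k ℓ a b) (gammaW k ℓ Wt) x x.track.uEnd ≤ ℓ := by
  have h := wdist_track_vertex_le a b Wt x.track (ℓ := ℓ) (m := x.pos) (d := ℓ - x.pos)
    (by have := x.pos_le; omega)
  rw [Nat.add_sub_cancel' x.pos_le, GV.track_vertex_pos hℓ, GV.Track.vertex_self hℓ] at h
  exact h.trans (by exact_mod_cast Nat.sub_le ℓ x.pos)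

lemma wdist_vEnd_le_or_wdist_uEnd_le (hdisj : ∀ i j, a i j = false ∨ b i j = false)
    (c c' : GV.Track k) :
    wdist (Gamma k ℓ a b) (gammaW k ℓ Wt) c.vEnd c'.vEnd ≤ Wt ∨
      wdist (Gamma k ℓ a b) (gammaW k ℓ Wt) c.uEnd c'.uEnd ≤ Wt := by
  have edge {x y : GV k ℓ} (h : gammaRel k ℓ a b x y ∨ gammaRel k ℓ a b y x)
      (hw : gammaW k ℓ Wt x y = Wt) : wdist (Gamma k ℓ a b) (gammaW k ℓ Wt) x y ≤ Wt :=
    (SimpleGraph.wdist_fromRel_le _ h).trans hw.le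
  rcases c with i | j | _ <;> rcases c' with i' | j' | _
  case one.two =>
    rcases hdisj i j' with h | h
    · exact .inl (edge (.inl h) rfl)
    · exact .inr (edge (.inl h) rfl)
  case two.one =>
    rcases hdisj i' j with h | h
    · exact .inl (edge (.inr h) rfl)
    · exact .inr (edge (.inr h) rfl)
  case hub.hub => exact .inl (by simp [GV.Track.vEnd, SimpleGraph.wdist_self])
  all_goals first
    | exact .inl (edge (.inl trivial) rfl)
    | exact .inl (edge (.inr trivial) rfl)

end Upper

section Lower
variable {k ℓ : ℕ} {a b : Fin k → Fin k → Bool} {i j : Fin k}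

def GV.Track.level (i j : Fin k) : GV.Track k → ℕ
  | one i' => if i' = i then 0 else 1
  | two j' => if j' = j then 2 else 1
  | hub => 1

lemma level_pos_step_of_gammaRel (ha : a i j = true) (hb : b i j = true) (Wt : ℝ≥0∞)
    {x y : GV k ℓ} (h : gammaRel k ℓ a b x y) :
    (x.pos = y.pos ∧ x.track.level i j ≤ y.track.level i j + 1 ∧
        y.track.level i j ≤ x.track.level i j + 1 ∧ gammaW k ℓ Wt x y = Wt) ∨
      (x.track.level i j = y.track.level i j ∧ x.pos ≤ y.pos + 1 ∧ y.pos ≤ x.pos + 1 ∧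
        gammaW k ℓ Wt x y = 1) := by
  cases x <;> cases y <;> simp only [gammaRel] at h <;>
    simp only [GV.track, GV.pos, GV.Track.level, gammaW] <;> (try split_ifs) <;>
    simp_all <;> omega

noncomputable def GV.potential (i j : Fin k) (Wt : ℝ≥0∞) (x : GV k ℓ) : ℝ≥0∞ :=
  x.track.level i j * Wt + x.pos

lemma potential_le_add_gammaW (ha : a i j = true) (hb : b i j = true) (Wt : ℝ≥0∞)
    {x y : GV k ℓ} (h : gammaRel k ℓ a b x y) :
    y.potential i j Wt ≤ x.potential i j Wt + gammaW k ℓ Wt x y ∧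
      x.potential i j Wt ≤ y.potential i j Wt + gammaW k ℓ Wt x y := by
  rcases level_pos_step_of_gammaRel ha hb Wt h with ⟨hp, h₁, h₂, hw⟩ | ⟨hl, h₁, h₂, hw⟩
  · have heavy (l l' : ℕ) (hl : l' ≤ l + 1) : (l' : ℝ≥0∞) * Wt + y.pos ≤ l * Wt + y.pos + Wt :=
      calc (l' : ℝ≥0∞) * Wt + y.pos ≤ (l + 1) * Wt + y.pos := by gcongr; exact_mod_cast hl
        _ = l * Wt + y.pos + Wt := by ring
    simp only [GV.potential, hw, hp]
    exact ⟨heavy _ _ h₂, heavy _ _ h₁⟩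
  · have light (p p' : ℕ) (hp : p' ≤ p + 1) :
        (y.track.level i j : ℝ≥0∞) * Wt + p' ≤ y.track.level i j * Wt + p + 1 := by
      rw [add_assoc]; gcongr; exact_mod_cast hp
    simp only [GV.potential, hw, hl]
    exact ⟨light _ _ h₂, light _ _ h₁⟩

lemma le_wdist_V1_U2 (ha : a i j = true) (hb : b i j = true) (Wt : ℝ≥0∞) :
    2 * Wt + ℓ ≤ wdist (Gamma k ℓ a b) (gammaW k ℓ Wt) (.V1 i) (.U2 j) := by
  have key := SimpleGraph.le_add_wdist_of_potential (Gamma k ℓ a b) (gammaW k ℓ Wt)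
    (GV.potential i j Wt) ?_ (.V1 i) (.U2 j)
  · simpa [GV.potential, GV.track, GV.pos, GV.Track.level] using key
  rintro x y ⟨-, h | h⟩
  · exact (potential_le_add_gammaW ha hb Wt h).1
  · exact gammaW_comm Wt x y ▸ (potential_le_add_gammaW ha hb Wt h).2

end Lower

lemma wdist_le_of_disjoint {k ℓ : ℕ} (hℓ : 1 ≤ ℓ) {a b : Fin k → Fin k → Bool} (Wt : ℝ≥0∞)
    (hdisj : ∀ i j, a i j = false ∨ b i j = false) (x y : GV k ℓ) :
    wdist (Gamma k ℓ a b) (gammaW k ℓ Wt) x y ≤ Wt + 2 * ℓ := by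
  have via (u v : GV k ℓ) (hx : wdist (Gamma k ℓ a b) (gammaW k ℓ Wt) x u ≤ ℓ)
      (huv : wdist (Gamma k ℓ a b) (gammaW k ℓ Wt) u v ≤ Wt)
      (hy : wdist (Gamma k ℓ a b) (gammaW k ℓ Wt) y v ≤ ℓ) :
      wdist (Gamma k ℓ a b) (gammaW k ℓ Wt) x y ≤ Wt + 2 * ℓ := by
    rw [SimpleGraph.wdist_comm _ _ (gammaW_comm Wt)] at hy
    calc wdist (Gamma k ℓ a b) (gammaW k ℓ Wt) x y
        ≤ wdist (Gamma k ℓ a b) (gammaW k ℓ Wt) x u + wdist (Gamma k ℓ a b) (gammaW k ℓ Wt) u v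
          + wdist (Gamma k ℓ a b) (gammaW k ℓ Wt) v y :=
          (SimpleGraph.wdist_triangle _ _ _ v _).trans
            (add_le_add_left (SimpleGraph.wdist_triangle _ _ _ _ _) _)
      _ ≤ ℓ + Wt + ℓ := by gcongr
      _ = Wt + 2 * ℓ := by ring
  rcases wdist_vEnd_le_or_wdist_uEnd_le a b Wt hdisj x.track y.track with h | h
  · exact via _ _ (wdist_track_vEnd_le a b Wt hℓ x) h (wdist_track_vEnd_le a b Wt hℓ y)
  · exact via _ _ (wdist_track_uEnd_le a b Wt hℓ x) h (wdist_track_uEnd_le a b Wt hℓ y)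

theorem gamma_weighted_diameter_gap_general (k ℓ : ℕ) (hℓ : 1 ≤ ℓ)
    (a b : Fin k → Fin k → Bool) (Wt : ℝ≥0∞) :
    ((∀ i j, a i j = false ∨ b i j = false) →
      ∀ x y : GV k ℓ,
        wdist (Gamma k ℓ a b) (gammaW k ℓ Wt) x y ≤ Wt + 2 * ℓ) ∧
    ((∃ i j, a i j = true ∧ b i j = true) →
      ∃ x y : GV k ℓ,
        2 * Wt + ℓ ≤ wdist (Gamma k ℓ a b) (gammaW k ℓ Wt) x y) :=
  ⟨wdist_le_of_disjoint hℓ Wt, fun ⟨_, _, ha, hb⟩ => ⟨_, _, le_wdist_V1_U2 ha hb Wt⟩⟩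

/-- weighted diameter gap of Γ^{a,b}_{k,ℓ,W} for W > ℓ ≥ 1:
if `a` and `b` are disjoint then every pair of vertices is at distance at most
`W + 2ℓ`; otherwise some pair is at distance at least `2W + ℓ`. -/
theorem gamma_weighted_diameter_gap (k ℓ : ℕ) (hk : 1 ≤ k) (hℓ : 1 ≤ ℓ)
    (a b : Fin k → Fin k → Bool) (Wt : ℝ≥0∞) (hWt : (ℓ : ℝ≥0∞) < Wt) (hWtop : Wt ≠ ⊤) :
    ((∀ i j, a i j = false ∨ b i j = false) →
      ∀ x y : GV k ℓ,
        wdist (Gamma k ℓ a b) (gammaW k ℓ Wt) x y ≤ Wt + 2 * ℓ) ∧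
    ((∃ i j, a i j = true ∧ b i j = true) →
      ∃ x y : GV k ℓ,
        2 * Wt + ℓ ≤ wdist (Gamma k ℓ a b) (gammaW k ℓ Wt) x y) :=
  gamma_weighted_diameter_gap_general k ℓ hℓ a b Wt
end

section
/- In the graph $\Gamma^{a,b}_{k,\ell,1}$ (all weights equal to 1): the bit strings $a, b \in \{0,1\}^{k^2}$ are disjoint (there is no index $i$ with $a_i = b_i = 1$) if and only if the (unweighted) diameter of $\Gamma^{a,b}_{k,\ell,1}$ is $\ell + 1$; otherwise the diameter is $\ell + 2$. -/
open scoped ENNReal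

/-!
With unit weights the weighted distance is the graph distance, so the claim is about the diameter.
Every vertex sits at some height `h ≤ ℓ` on one of the `2k + 1` paths of `ℓ` edges
(`V1 i — U1 i`, `V2 i — U2 i`, `vhat — uhat`). The bottom ends of these paths are pairwise within
distance 2 through `vhat`, the top ends through `uhat`; going down from both vertices or up from
both gives `ℓ + 2`. If `a` and `b` are disjoint, the bottom ends or the top ends of any two paths
are adjacent or equal, which saves one step exactly when the heights add up to `ℓ`.
Conversely, an explicit `1`-Lipschitz potential shows that `V1 i` is at distance at least `ℓ + 1`
from `U2 j`, and at least `ℓ + 2` when `a i j = b i j = 1`.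
-/

namespace SimpleGraph

variable {V : Type*} {G : SimpleGraph V}

lemma walkWeight_eq_length_of_forall_eq_one {w : V → V → ℝ≥0∞} (hw : ∀ x y, w x y = 1) {u v : V}
    (p : G.Walk u v) : walkWeight G w p = p.length := by
  induction p with
  | nil => simp [walkWeight]
  | cons h q ih =>
    simp only [walkWeight] at ih ⊢
    rw [Walk.darts_cons, List.map_cons, List.sum_cons, hw, ih, Walk.length_cons]
    push_cast
    ring

lemma wdist_eq_edist_of_forall_eq_one {w : V → V → ℝ≥0∞} (hw : ∀ x y, w x y = 1) (u v : V) :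
    wdist G w u v = G.edist u v := by
  simp [wdist, edist, walkWeight_eq_length_of_forall_eq_one hw]

lemma iSup_wdist_eq_ediam_of_forall_eq_one {w : V → V → ℝ≥0∞} (hw : ∀ x y, w x y = 1) :
    ⨆ (x : V) (y : V), wdist G w x y = G.ediam := by
  simp [wdist_eq_edist_of_forall_eq_one hw, ediam_eq_iSup_iSup_edist]

lemma edist_le_of_route {x y u v : V} {m n r N : ℕ} (hx : G.edist x u ≤ m)
    (huv : G.edist u v ≤ n) (hy : G.edist y v ≤ r) (h : m + n + r ≤ N) :
    G.edist x y ≤ N :=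
  calc G.edist x y ≤ G.edist x u + G.edist u v + G.edist v y :=
        G.edist_triangle.trans (by gcongr; exact G.edist_triangle)
    _ ≤ m + n + r := by gcongr; rwa [edist_comm]
    _ ≤ N := by exact_mod_cast h

lemma edist_le_of_adj_succ {f : ℕ → V} {n : ℕ} (hf : ∀ h < n, G.Adj (f h) (f (h + 1)))
    {i : ℕ} : ∀ d, i + d ≤ n → G.edist (f i) (f (i + d)) ≤ d
  | 0, _ => by simp
  | d + 1, hd =>
    calc G.edist (f i) (f (i + (d + 1))) ≤ G.edist (f i) (f (i + d)) + 1 := by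
          refine (G.edist_triangle (v := f (i + d))).trans ?_
          gcongr
          exact (edist_eq_one_iff_adj.mpr (hf (i + d) (by omega))).le
      _ ≤ ((d + 1 : ℕ) : ℕ∞) := by
          push_cast
          gcongr
          exact edist_le_of_adj_succ hf d (by omega)

lemma le_edist_of_forall_adj_le_add_one {f : V → ℕ} (hf : ∀ u v, G.Adj u v → f u ≤ f v + 1)
    {u v : V} {n : ℕ} (h : n + f v ≤ f u) : (n : ℕ∞) ≤ G.edist u v := by
  have walk_bound : ∀ {x y : V} (p : G.Walk x y), f x ≤ f y + p.length := by
    intro x y p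
    induction p with
    | nil => simp
    | cons hadj q ih => have := hf _ _ hadj; rw [Walk.length_cons]; omega
  exact le_iInf fun p => by have := walk_bound p; exact_mod_cast (by omega : n ≤ p.length)

def pathVertex {ℓ : ℕ} (bot : V) (mid : Fin (ℓ - 1) → V) (top : V) (h : ℕ) : V :=
  if h0 : h = 0 then bot else if hh : h < ℓ then mid ⟨h - 1, by omega⟩ else top

lemma adj_pathVertex_succ {ℓ : ℕ} {bot top : V} {mid : Fin (ℓ - 1) → V}
    (hshort : ℓ = 1 → G.Adj bot top)
    (hbot : ∀ t : Fin (ℓ - 1), t.val = 0 → G.Adj bot (mid t))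
    (hmid : ∀ t s : Fin (ℓ - 1), t.val + 1 = s.val → G.Adj (mid t) (mid s))
    (htop : ∀ t : Fin (ℓ - 1), t.val = ℓ - 2 → G.Adj (mid t) top) {h : ℕ} (hh : h < ℓ) :
    G.Adj (pathVertex bot mid top h) (pathVertex bot mid top (h + 1)) := by
  unfold pathVertex
  rcases Nat.eq_zero_or_pos h with rfl | hpos
  · by_cases h1 : 1 < ℓ
    · simpa [h1] using hbot ⟨0, by omega⟩ rfl
    · simpa [h1] using hshort (by omega)
  · by_cases hs : h + 1 < ℓ
    · simpa [hpos.ne', hh, hs] using hmid ⟨h - 1, by omega⟩ ⟨h, by omega⟩ (by simp; omega)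
    · simpa [hpos.ne', hh, hs] using htop ⟨h - 1, by omega⟩ (by simp; omega)

end SimpleGraph

lemma gammaW_one (k ℓ : ℕ) (x y : GV k ℓ) : gammaW k ℓ 1 x y = 1 := by
  cases x <;> cases y <;> rfl

namespace Gamma

open GV SimpleGraph

variable {k ℓ : ℕ} {a b : Fin k → Fin k → Bool}

lemma adj_of_rel {x y : GV k ℓ} (hne : x ≠ y) (h : gammaRel k ℓ a b x y) :
    (Gamma k ℓ a b).Adj x y :=
  (fromRel_adj _ _ _).mpr ⟨hne, Or.inl h⟩

inductive Column (k : ℕ) : Type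
  | first (i : Fin k)
  | second (i : Fin k)
  | hub

def Column.vertex : Column k → ℕ → GV k ℓ
  | .first i => pathVertex (V1 i) (P1 i) (U1 i)
  | .second i => pathVertex (V2 i) (P2 i) (U2 i)
  | .hub => pathVertex vhat M uhat

lemma Column.adj_vertex_succ (c : Column k) {h : ℕ} (hh : h < ℓ) :
    (Gamma k ℓ a b).Adj (c.vertex h) (c.vertex (h + 1)) := by
  cases c <;> refine adj_pathVertex_succ ?_ ?_ ?_ ?_ hh <;> intros <;>
    refine adj_of_rel ?_ ?_ <;> simp_all [gammaRel, Fin.ext_iff] <;> omega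

lemma Column.edist_vertex_le (c : Column k) {i j : ℕ} (hij : i ≤ j) (hj : j ≤ ℓ) :
    (Gamma k ℓ a b).edist (c.vertex i) (c.vertex j) ≤ (j - i : ℕ) := by
  obtain ⟨d, rfl⟩ := Nat.exists_eq_add_of_le hij
  simpa using edist_le_of_adj_succ (f := c.vertex) (fun _ hh => c.adj_vertex_succ hh) d hj

def _root_.GV.column : GV k ℓ → Column k
  | V1 i | P1 i _ | U1 i => .first i
  | V2 i | P2 i _ | U2 i => .second i
  | vhat | M _ | uhat => .hub

def _root_.GV.height : GV k ℓ → ℕ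
  | V1 _ | V2 _ | vhat => 0
  | P1 _ t | P2 _ t | M t => t.val + 1
  | U1 _ | U2 _ | uhat => ℓ

lemma height_le (x : GV k ℓ) : x.height ≤ ℓ := by
  cases x <;> simp only [GV.height] <;> omega

lemma vertex_column_height (hℓ : 1 ≤ ℓ) (x : GV k ℓ) : x.column.vertex x.height = x := by
  cases x <;> simp [GV.column, GV.height, Column.vertex, pathVertex] <;> omega

lemma edist_vertex_zero_le (hℓ : 1 ≤ ℓ) (x : GV k ℓ) :
    (Gamma k ℓ a b).edist x (x.column.vertex 0) ≤ x.height := by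
  have h := x.column.edist_vertex_le (a := a) (b := b) x.height.zero_le (height_le x)
  rwa [vertex_column_height hℓ, edist_comm, Nat.sub_zero] at h

lemma edist_vertex_top_le (hℓ : 1 ≤ ℓ) (x : GV k ℓ) :
    (Gamma k ℓ a b).edist x (x.column.vertex ℓ) ≤ (ℓ - x.height : ℕ) := by
  have h := x.column.edist_vertex_le (a := a) (b := b) (height_le x) le_rfl
  rwa [vertex_column_height hℓ] at h

lemma Column.edist_vertex_zero_vhat (c : Column k) :
    (Gamma k ℓ a b).edist (c.vertex 0) vhat ≤ 1 := by
  rw [edist_le_one_iff_adj_or_eq]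
  cases c <;> simp [Column.vertex, pathVertex, Gamma, gammaRel]

lemma Column.edist_vertex_top_uhat (hℓ : 1 ≤ ℓ) (c : Column k) :
    (Gamma k ℓ a b).edist (c.vertex ℓ) uhat ≤ 1 := by
  rw [edist_le_one_iff_adj_or_eq]
  cases c <;> simp [Column.vertex, pathVertex, Gamma, gammaRel, Nat.one_le_iff_ne_zero.mp hℓ]

lemma Column.edist_vertex_zero_le_two (c d : Column k) :
    (Gamma k ℓ a b).edist (c.vertex 0) (d.vertex 0) ≤ 2 :=
  edist_le_of_route c.edist_vertex_zero_vhat (n := 0) (by simp) d.edist_vertex_zero_vhat (N := 2)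
    (by omega)

lemma Column.edist_vertex_top_le_two (hℓ : 1 ≤ ℓ) (c d : Column k) :
    (Gamma k ℓ a b).edist (c.vertex ℓ) (d.vertex ℓ) ≤ 2 :=
  edist_le_of_route (c.edist_vertex_top_uhat hℓ) (n := 0) (by simp) (d.edist_vertex_top_uhat hℓ)
    (N := 2) (by omega)

lemma Column.edist_vertex_zero_le_one_or_top_le_one (hℓ : 1 ≤ ℓ)
    (hab : ¬∃ i j, a i j = true ∧ b i j = true) (c d : Column k) :
    (Gamma k ℓ a b).edist (c.vertex 0) (d.vertex 0) ≤ 1 ∨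
      (Gamma k ℓ a b).edist (c.vertex ℓ) (d.vertex ℓ) ≤ 1 := by
  simp only [edist_le_one_iff_adj_or_eq]
  cases c <;> cases d <;>
    simp [Column.vertex, pathVertex, Gamma, gammaRel, Nat.one_le_iff_ne_zero.mp hℓ] <;> grind

lemma edist_le_add_two (hℓ : 1 ≤ ℓ) (x y : GV k ℓ) :
    (Gamma k ℓ a b).edist x y ≤ (ℓ + 2 : ℕ) := by
  have hx := height_le x
  have hy := height_le y
  by_cases h : x.height + y.height ≤ ℓ
  · exact edist_le_of_route (edist_vertex_zero_le hℓ x) (n := 2)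
      (x.column.edist_vertex_zero_le_two _) (edist_vertex_zero_le hℓ y) (by omega)
  · exact edist_le_of_route (edist_vertex_top_le hℓ x) (n := 2)
      (x.column.edist_vertex_top_le_two hℓ _) (edist_vertex_top_le hℓ y) (by omega)

lemma edist_le_add_one (hℓ : 1 ≤ ℓ) (hab : ¬∃ i j, a i j = true ∧ b i j = true)
    (x y : GV k ℓ) : (Gamma k ℓ a b).edist x y ≤ (ℓ + 1 : ℕ) := by
  have hx := height_le x
  have hy := height_le y
  rcases lt_trichotomy (x.height + y.height) ℓ with h | h | h
  · exact edist_le_of_route (edist_vertex_zero_le hℓ x) (n := 2)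
      (x.column.edist_vertex_zero_le_two _) (edist_vertex_zero_le hℓ y) (by omega)
  · rcases x.column.edist_vertex_zero_le_one_or_top_le_one hℓ hab y.column with h1 | h1
    · exact edist_le_of_route (edist_vertex_zero_le hℓ x) (n := 1) h1
        (edist_vertex_zero_le hℓ y) (by omega)
    · exact edist_le_of_route (edist_vertex_top_le hℓ x) (n := 1) h1
        (edist_vertex_top_le hℓ y) (by omega)
  · exact edist_le_of_route (edist_vertex_top_le hℓ x) (n := 2)
      (x.column.edist_vertex_top_le_two hℓ _) (edist_vertex_top_le hℓ y) (by omega)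

/-- The distance to `U2 j`; only its `1`-Lipschitz property is proved, which suffices for lower
bounds. -/
def potential (a b : Fin k → Fin k → Bool) (j : Fin k) : GV k ℓ → ℕ
  | V1 m => if a m j && b m j then ℓ + 2 else ℓ + 1
  | V2 m => if m = j then ℓ else ℓ + 1
  | vhat => ℓ + 1
  | P1 m t => (if b m j then ℓ + 1 else ℓ) - t.val
  | P2 m t => (if m = j then ℓ - 1 else ℓ) - t.val
  | M t => ℓ - t.val
  | U1 m => if b m j then 2 else 1
  | U2 m => if m = j then 0 else 1
  | uhat => 1

lemma potential_le_add_one_of_rel (j : Fin k) {x y : GV k ℓ} (h : gammaRel k ℓ a b x y) :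
    potential a b j x ≤ potential a b j y + 1 ∧ potential a b j y ≤ potential a b j x + 1 := by
  cases x <;> cases y <;> simp only [gammaRel] at h <;> (try obtain ⟨rfl, h⟩ := h) <;>
    simp only [potential] <;> constructor <;> (try split_ifs) <;> first | omega | simp_all

lemma potential_le_add_one (j : Fin k) {x y : GV k ℓ} (h : (Gamma k ℓ a b).Adj x y) :
    potential a b j x ≤ potential a b j y + 1 := by
  rcases ((fromRel_adj _ _ _).mp h).2 with h | h
  · exact (potential_le_add_one_of_rel j h).1
  · exact (potential_le_add_one_of_rel j h).2

lemma le_edist_V1_U2 (i j : Fin k) :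
    ((ℓ + 1 : ℕ) : ℕ∞) ≤ (Gamma k ℓ a b).edist (V1 i) (U2 j) :=
  le_edist_of_forall_adj_le_add_one (fun _ _ => potential_le_add_one j)
    (by simp only [potential]; split_ifs <;> omega)

lemma le_edist_V1_U2_of_eq_true {i j : Fin k} (ha : a i j = true) (hb : b i j = true) :
    ((ℓ + 2 : ℕ) : ℕ∞) ≤ (Gamma k ℓ a b).edist (V1 i) (U2 j) :=
  le_edist_of_forall_adj_le_add_one (fun _ _ => potential_le_add_one j)
    (by simp [potential, ha, hb])

theorem ediam_eq (hk : 1 ≤ k) (hℓ : 1 ≤ ℓ) :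
    (Gamma k ℓ a b).ediam =
      ((if ∃ i j, a i j = true ∧ b i j = true then ℓ + 2 else ℓ + 1 : ℕ) : ℕ∞) := by
  split_ifs with hab
  · obtain ⟨i, j, ha, hb⟩ := hab
    exact le_antisymm (ediam_le_of_edist_le (edist_le_add_two hℓ))
      ((le_edist_V1_U2_of_eq_true ha hb).trans edist_le_ediam)
  · exact le_antisymm (ediam_le_of_edist_le (edist_le_add_one hℓ hab))
      ((le_edist_V1_U2 ⟨0, hk⟩ ⟨0, hk⟩).trans edist_le_ediam)

end Gamma

/-- unweighted diameter of Γ^{a,b}_{k,ℓ,1}: the bit strings `a`, `b`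
are disjoint iff the diameter is `ℓ + 1`; otherwise the diameter is `ℓ + 2`. -/
theorem gamma_unweighted_diameter (k ℓ : ℕ) (hk : 1 ≤ k) (hℓ : 1 ≤ ℓ)
    (a b : Fin k → Fin k → Bool) :
    ((¬ ∃ i j, a i j = true ∧ b i j = true) ↔
      (⨆ (x : GV k ℓ) (y : GV k ℓ), wdist (Gamma k ℓ a b) (gammaW k ℓ 1) x y)
        = (ℓ : ℝ≥0∞) + 1) ∧
    ((∃ i j, a i j = true ∧ b i j = true) →
      (⨆ (x : GV k ℓ) (y : GV k ℓ), wdist (Gamma k ℓ a b) (gammaW k ℓ 1) x y)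
        = (ℓ : ℝ≥0∞) + 2) := by
  rw [SimpleGraph.iSup_wdist_eq_ediam_of_forall_eq_one (gammaW_one k ℓ), Gamma.ediam_eq hk hℓ]
  by_cases hab : ∃ i j, a i j = true ∧ b i j = true <;> simp [hab]
end
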